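/- Let q₀ ∈ ℝ and q_v ∈ ℝ³ satisfy q₀² + ‖q_v‖² = 1 and q₀ ≠ 0, and let F : ℝ³ → ℝ³ be the linear map F v = (1/2)(q₀·v + q_v × v). Let ρ₁, ρ₂, ρ₃ > 0, let ψ : ℝ³ → ℝ³ be the diagonal map (ψ v)_i = v_i/ρ_i, let γ > 0, k_m > 0, M_ω > 0, and let ε ∈ ℝ³. Define α = −(|q₀|/2)·k_m·M_ω·F^{−1}(ψ^{−1}(w)) where w = (tanh(γε₁), tanh(γε₂), tanh(γε₃)). Then ‖α‖ ≤ √3·k_m·M_ω·max(ρ₁, ρ₂, ρ₃). -/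

import Mathlib

/-! Since `a × v` is orthogonal to `v`, the Jacobian `F v = ½ (q₀ v + a × v)` satisfies
`‖F v‖ ≥ |q₀| ‖v‖ / 2`, i.e. `|q₀| / 2 · ‖F⁻¹ x‖ ≤ ‖x‖`; this cancels the prefactor `|q₀| / 2`
of `α`. The remaining vector has entries `ρᵢ tanh(γ εᵢ)` of modulus at most `max ρᵢ`, so its
Euclidean norm is at most `√3 · max ρᵢ`. -/

/-- The three-dimensional cross product on `EuclideanSpace ℝ (Fin 3)`. -/
noncomputable def cross3 (a b : EuclideanSpace ℝ (Fin 3)) : EuclideanSpace ℝ (Fin 3) :=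
  (WithLp.equiv 2 (Fin 3 → ℝ)).symm
    (crossProduct ((WithLp.equiv 2 (Fin 3 → ℝ)) a) ((WithLp.equiv 2 (Fin 3 → ℝ)) b))

theorem norm_le_norm_add_of_inner_eq_zero {𝕜 E : Type*} [RCLike 𝕜] [NormedAddCommGroup E]
    [InnerProductSpace 𝕜 E] {x y : E} (h : inner 𝕜 x y = 0) : ‖x‖ ≤ ‖x + y‖ := by
  rw [mul_self_le_mul_self_iff (norm_nonneg x) (norm_nonneg _),
    norm_add_sq_eq_norm_sq_add_norm_sq_of_inner_eq_zero x y h]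
  exact le_add_of_nonneg_right (mul_self_nonneg _)

theorem EuclideanSpace.norm_le_sqrt_card_mul {ι : Type*} [Fintype ι]
    (x : EuclideanSpace ℝ ι) {R : ℝ} (hR : 0 ≤ R) (hx : ∀ i, ‖x i‖ ≤ R) :
    ‖x‖ ≤ √(Fintype.card ι) * R := by
  calc ‖x‖ = √(∑ i, ‖x i‖ ^ 2) := EuclideanSpace.norm_eq x
    _ ≤ √(∑ _ : ι, R ^ 2) := by gcongr with i; exact hx i
    _ = √(Fintype.card ι) * R := by
      rw [Finset.sum_const, Finset.card_univ, nsmul_eq_mul, Real.sqrt_mul (Nat.cast_nonneg _),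
        Real.sqrt_sq hR]

theorem real_inner_cross3_self (a v : EuclideanSpace ℝ (Fin 3)) :
    inner ℝ v (cross3 a v) = 0 := by
  rw [EuclideanSpace.inner_eq_star_dotProduct, star_trivial, dotProduct_comm]
  exact dot_cross_self a.ofLp v.ofLp

theorem abs_mul_norm_le_norm_smul_add_cross3 (c : ℝ) (a v : EuclideanSpace ℝ (Fin 3)) :
    |c| * ‖v‖ ≤ ‖c • v + cross3 a v‖ := by
  rw [← Real.norm_eq_abs, ← norm_smul]
  exact norm_le_norm_add_of_inner_eq_zero (𝕜 := ℝ) <| by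
    rw [real_inner_smul_left, real_inner_cross3_self, mul_zero]

theorem abs_div_two_mul_norm_le_norm_apply {q₀ : ℝ} {qv : EuclideanSpace ℝ (Fin 3)}
    {F : EuclideanSpace ℝ (Fin 3) → EuclideanSpace ℝ (Fin 3)}
    (hF : ∀ v, F v = (1 / 2 : ℝ) • (q₀ • v + cross3 qv v)) (v : EuclideanSpace ℝ (Fin 3)) :
    |q₀| / 2 * ‖v‖ ≤ ‖F v‖ := by
  rw [hF, norm_smul, Real.norm_of_nonneg (by norm_num : (0 : ℝ) ≤ 1 / 2)]
  linarith [abs_mul_norm_le_norm_smul_add_cross3 q₀ qv v]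

theorem norm_mul_tanh_le_max3 (ρ : Fin 3 → ℝ) (hρ : ∀ i, 0 < ρ i) (x : Fin 3 → ℝ) (i : Fin 3) :
    ‖ρ i * Real.tanh (x i)‖ ≤ max (ρ 0) (max (ρ 1) (ρ 2)) := by
  have hρ_le : ρ i ≤ max (ρ 0) (max (ρ 1) (ρ 2)) := by fin_cases i <;> simp
  rw [norm_mul, Real.norm_of_nonneg (hρ i).le, Real.norm_eq_abs]
  nlinarith [Real.abs_tanh_lt_one (x i), hρ i]

theorem virtual_control_law_norm_bound_general (q₀ : ℝ) (qv : EuclideanSpace ℝ (Fin 3))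
    (F : EuclideanSpace ℝ (Fin 3) ≃L[ℝ] EuclideanSpace ℝ (Fin 3))
    (hF : ∀ v, F v = (1 / 2 : ℝ) • (q₀ • v + cross3 qv v))
    (ρ : Fin 3 → ℝ) (hρ : ∀ i, 0 < ρ i)
    (γ km Mω : ℝ) (hkm : 0 < km) (hMω : 0 < Mω)
    (ε : EuclideanSpace ℝ (Fin 3))
    (α : EuclideanSpace ℝ (Fin 3))
    (hα : α = (-(|q₀| / 2 * km * Mω)) •
        F.symm ((WithLp.equiv 2 (Fin 3 → ℝ)).symm
          (fun i => ρ i * Real.tanh (γ * ε i)))) :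
    ‖α‖ ≤ Real.sqrt 3 * km * Mω * max (ρ 0) (max (ρ 1) (ρ 2)) := by
  set w : EuclideanSpace ℝ (Fin 3) :=
    (WithLp.equiv 2 (Fin 3 → ℝ)).symm (fun i => ρ i * Real.tanh (γ * ε i))
  set R := max (ρ 0) (max (ρ 1) (ρ 2))
  have hw : ‖w‖ ≤ √3 * R := by
    simpa using EuclideanSpace.norm_le_sqrt_card_mul w (lt_max_of_lt_left (hρ 0)).le
      (norm_mul_tanh_le_max3 ρ hρ (fun i => γ * ε i))
  have hFsymm : |q₀| / 2 * ‖F.symm w‖ ≤ ‖w‖ := by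
    simpa using abs_div_two_mul_norm_le_norm_apply hF (F.symm w)
  have hkmMω : 0 ≤ km * Mω := by positivity
  calc ‖α‖ = km * Mω * (|q₀| / 2 * ‖F.symm w‖) := by
        rw [hα, norm_smul, norm_neg, Real.norm_of_nonneg (by positivity)]; ring
    _ ≤ km * Mω * (√3 * R) := mul_le_mul_of_nonneg_left (hFsymm.trans hw) hkmMω
    _ = √3 * km * Mω * R := by ring

theorem virtual_control_law_norm_bound (q₀ : ℝ) (qv : EuclideanSpace ℝ (Fin 3))
    (hunit : q₀ ^ 2 + ‖qv‖ ^ 2 = 1) (hq₀ : q₀ ≠ 0)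
    (F : EuclideanSpace ℝ (Fin 3) ≃L[ℝ] EuclideanSpace ℝ (Fin 3))
    (hF : ∀ v, F v = (1 / 2 : ℝ) • (q₀ • v + cross3 qv v))
    (ρ : Fin 3 → ℝ) (hρ : ∀ i, 0 < ρ i)
    (γ km Mω : ℝ) (hγ : 0 < γ) (hkm : 0 < km) (hMω : 0 < Mω)
    (ε : EuclideanSpace ℝ (Fin 3))
    (α : EuclideanSpace ℝ (Fin 3))
    (hα : α = (-(|q₀| / 2 * km * Mω)) •
        F.symm ((WithLp.equiv 2 (Fin 3 → ℝ)).symm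
          (fun i => ρ i * Real.tanh (γ * ε i)))) :
    ‖α‖ ≤ Real.sqrt 3 * km * Mω * max (ρ 0) (max (ρ 1) (ρ 2)) :=
  virtual_control_law_norm_bound_general q₀ qv F hF ρ hρ γ km Mω hkm hMω ε α hα
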